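/- arXiv:1205.6043 — 4 statements merged into one kernel-verified Lean document; each statement's English description precedes it below -/
import Mathlib

section
/- Under Efron's BCD(p) with m_j = j/2 (perfect balance after j assignments, j even), the conditional distribution of N_1(n) given N_1(j) = j/2 equals the unconditional distribution of N_1(n−j) shifted by j/2: P(N_1(n)=n_1 | N_1(j)=j/2) = P(N_1(n−j) = n_1 − j/2) for j/2 ≤ n_1 ≤ n − j/2. -/
/-!
Cut a sequence of length `j + k` into a prefix of length `j` and a suffix of length `k`. Its
probability is that of the prefix times that of the suffix under the design shifted by
`(j, N₁(j))`. Efron's design sees `(j, N₁(j))` only through the sign of `2 N₁(j) - j`, so after a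
balanced prefix the shifted design is Efron's design again. Summing over suffixes (whose
probabilities add up to `1`) shows that the balance event has the same probability in both trial
lengths. Summing over prefixes and suffixes together shows that the joint event factorizes, and
the conditional probability is the quotient.
-/

open Finset

/-- Number of treatment-1 assignments among the first `j` patients. -/
def count1 {n : ℕ} (t : Fin n → Bool) (j : ℕ) : ℕ :=
  ((Finset.univ : Finset (Fin n)).filter (fun i : Fin n => (i : ℕ) < j ∧ t i = true)).card

/-- Probability of an assignment sequence under the restricted randomization
procedure `φ`, where `φ j m = P(T_{j+1} = 1 | N_1(j) = m)`. -/
noncomputable def seqProb {n : ℕ} (φ : ℕ → ℕ → ℝ) (t : Fin n → Bool) : ℝ :=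
  ∏ i : Fin n,
    if t i = true then φ (i : ℕ) (count1 t (i : ℕ)) else 1 - φ (i : ℕ) (count1 t (i : ℕ))

open Classical in
/-- Probability of an event under the randomization procedure `φ`. -/
noncomputable def pr {n : ℕ} (φ : ℕ → ℕ → ℝ) (S : Set (Fin n → Bool)) : ℝ :=
  ∑ t : Fin n → Bool, if t ∈ S then seqProb φ t else 0

/-- Conditional probability `P(A | B)` under the randomization procedure `φ`. -/
noncomputable def condPr {n : ℕ} (φ : ℕ → ℕ → ℝ) (A B : Set (Fin n → Bool)) : ℝ :=
  pr φ (A ∩ B) / pr φ B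

/-- Efron's biased coin design: `efron p j m = P(T_{j+1} = 1 | N_1(j) = m)`. -/
noncomputable def efron (p : ℝ) (j m : ℕ) : ℝ :=
  if 2 * m = j then 1/2 else if 2 * m < j then p else 1 - p

lemma count1_eq_sum {n : ℕ} (t : Fin n → Bool) (k : ℕ) :
    count1 t k = ∑ i : Fin n, if (i : ℕ) < k ∧ t i = true then 1 else 0 := by
  rw [count1, Finset.card_filter]

lemma count1_append_of_le {j k : ℕ} (a : Fin j → Bool) (b : Fin k → Bool) {i : ℕ} (hi : i ≤ j) :
    count1 (Fin.append a b) i = count1 a i := by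
  rw [count1_eq_sum, count1_eq_sum, Fin.sum_univ_add]
  simp only [Fin.append_left, Fin.append_right, Fin.val_castAdd, Fin.val_natAdd]
  rw [add_eq_left]
  exact Finset.sum_eq_zero fun x _ => if_neg fun h => absurd h.1 (by omega)

lemma count1_append_add {j k : ℕ} (a : Fin j → Bool) (b : Fin k → Bool) (i : ℕ) :
    count1 (Fin.append a b) (j + i) = count1 a j + count1 b i := by
  rw [count1_eq_sum, count1_eq_sum, count1_eq_sum, Fin.sum_univ_add]
  simp only [Fin.append_left, Fin.append_right, Fin.val_castAdd, Fin.val_natAdd,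
    Nat.add_lt_add_iff_left]
  congr 1
  exact Finset.sum_congr rfl fun x _ => by simp [x.isLt, show (x : ℕ) < j + i by omega]

lemma seqProb_append {j k : ℕ} (φ : ℕ → ℕ → ℝ) (a : Fin j → Bool) (b : Fin k → Bool) :
    seqProb φ (Fin.append a b)
      = seqProb φ a * seqProb (fun i c => φ (j + i) (count1 a j + c)) b := by
  rw [seqProb, seqProb, seqProb, Fin.prod_univ_add]
  congr 1
  · refine Finset.prod_congr rfl fun i _ => ?_
    simp only [Fin.append_left, Fin.val_castAdd, count1_append_of_le a b i.isLt.le]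
  · refine Finset.prod_congr rfl fun i _ => ?_
    simp only [Fin.append_right, Fin.val_natAdd, count1_append_add]

lemma sum_seqProb_fin_one (φ : ℕ → ℕ → ℝ) : ∑ t : Fin 1 → Bool, seqProb φ t = 1 := by
  rw [← (Equiv.funUnique (Fin 1) Bool).symm.sum_comp, Fintype.sum_bool]
  simp [seqProb, count1]

lemma sum_fun_fin_add {α M : Type*} [Fintype α] [AddCommMonoid M] {j k : ℕ}
    (f : (Fin (j + k) → α) → M) :
    ∑ t, f t = ∑ a : Fin j → α, ∑ b : Fin k → α, f (Fin.append a b) := by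
  rw [← (Fin.appendEquiv j k).sum_comp, Fintype.sum_prod_type]
  rfl

lemma sum_seqProb (φ : ℕ → ℕ → ℝ) (n : ℕ) : ∑ t : Fin n → Bool, seqProb φ t = 1 := by
  induction n with
  | zero => rw [Fintype.sum_unique, seqProb, Fin.prod_univ_zero]
  | succ n ih =>
    simp only [sum_fun_fin_add (j := n) (k := 1), seqProb_append, ← Finset.mul_sum,
      sum_seqProb_fin_one, mul_one, ih]

lemma sum_seqProb_append {j k : ℕ} (φ : ℕ → ℕ → ℝ) (a : Fin j → Bool) :
    ∑ b : Fin k → Bool, seqProb φ (Fin.append a b) = seqProb φ a := by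
  simp only [seqProb_append, ← Finset.mul_sum, sum_seqProb, mul_one]

lemma pr_eq_of_append_mem_iff {j k : ℕ} (φ : ℕ → ℕ → ℝ) {A : Set (Fin j → Bool)}
    {S : Set (Fin (j + k) → Bool)} (hS : ∀ a b, Fin.append a b ∈ S ↔ a ∈ A) :
    pr φ S = pr φ A := by
  classical
  rw [pr, sum_fun_fin_add, pr]
  refine Finset.sum_congr rfl fun a _ => ?_
  simp only [hS]
  split_ifs
  · exact sum_seqProb_append φ a
  · exact Finset.sum_const_zero

lemma pr_eq_mul_of_append_mem_iff {j k m : ℕ} {φ : ℕ → ℕ → ℝ}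
    (hφ : (fun i c => φ (j + i) (m + c)) = φ) {A : Set (Fin j → Bool)} {B : Set (Fin k → Bool)}
    {S : Set (Fin (j + k) → Bool)} (hA : ∀ a ∈ A, count1 a j = m)
    (hS : ∀ a b, Fin.append a b ∈ S ↔ a ∈ A ∧ b ∈ B) :
    pr φ S = pr φ A * pr φ B := by
  classical
  rw [pr, sum_fun_fin_add, pr, pr, Finset.sum_mul_sum]
  refine Finset.sum_congr rfl fun a _ => Finset.sum_congr rfl fun b _ => ?_
  simp only [hS]
  by_cases ha : a ∈ A
  · rw [seqProb_append, hA a ha, hφ]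
    simp [ha]
  · simp [ha]

lemma efron_shift_of_balanced (p : ℝ) {j m : ℕ} (hj : 2 * m = j) :
    (fun i c => efron p (j + i) (m + c)) = efron p := by
  funext i c
  unfold efron
  rcases Nat.lt_trichotomy (2 * c) i with h | h | h
  · rw [if_neg (by omega), if_pos (by omega), if_neg (by omega), if_pos (by omega)]
  · rw [if_pos (by omega), if_pos (by omega)]
  · rw [if_neg (by omega), if_neg (by omega), if_neg (by omega), if_neg (by omega)]

theorem bcd_regeneration_general (n j m n1 : ℕ) (p : ℝ) (hjn : j < n) (hj2 : 2 * m = j)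
    (hlo : m ≤ n1)
    (hpos : 0 < pr (efron p) {t : Fin n → Bool | count1 t j = m}) :
    condPr (efron p) {t : Fin n → Bool | count1 t n = n1}
        {t : Fin n → Bool | count1 t j = m}
      = pr (efron p) {t : Fin (n - j) → Bool | count1 t (n - j) = n1 - m} := by
  obtain ⟨k, rfl⟩ : ∃ k, n = j + k := ⟨n - j, by omega⟩
  rw [Nat.add_sub_cancel_left]
  have hbalanced : pr (efron p) {t : Fin (j + k) → Bool | count1 t j = m}
      = pr (efron p) {a : Fin j → Bool | count1 a j = m} :=
    pr_eq_of_append_mem_iff _ fun a b => by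
      simp only [Set.mem_ofPred_eq, count1_append_of_le a b le_rfl]
  have hjoint : pr (efron p)
        ({t : Fin (j + k) → Bool | count1 t (j + k) = n1} ∩ {t | count1 t j = m})
      = pr (efron p) {a : Fin j → Bool | count1 a j = m}
        * pr (efron p) {b : Fin k → Bool | count1 b k = n1 - m} :=
    pr_eq_mul_of_append_mem_iff (efron_shift_of_balanced p hj2) (fun _ ha => ha) fun a b => by
      simp only [Set.mem_inter_iff, Set.mem_ofPred_eq, count1_append_add,
        count1_append_of_le a b le_rfl]
      omega
  rw [hbalanced] at hpos
  rw [condPr, hjoint, hbalanced, mul_div_cancel_left₀ _ hpos.ne']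

/-- Theorem 2.2, part (2): under Efron's BCD(p), at a perfectly
balanced interim point `N_1(j) = j/2` (with `j = 2m` even), the process
regenerates: `P(N_1(n)=n_1 | N_1(j)=j/2) = P(N_1(n−j) = n_1 − j/2)`, the latter
being the unconditional distribution for a trial of `n − j` patients. -/
theorem bcd_regeneration (n j m n1 : ℕ) (p : ℝ) (hp : 1 / 2 ≤ p) (hp1 : p ≤ 1)
    (hj1 : 1 ≤ j) (hjn : j < n) (hj2 : 2 * m = j)
    (hlo : m ≤ n1) (hhi : n1 ≤ n - m)
    (hpos : 0 < pr (efron p) {t : Fin n → Bool | count1 t j = m}) :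
    condPr (efron p) {t : Fin n → Bool | count1 t n = n1}
        {t : Fin n → Bool | count1 t j = m}
      = pr (efron p) {t : Fin (n - j) → Bool | count1 t (n - j) = n1 - m} :=
  bcd_regeneration_general n j m n1 p hjn hj2 hlo hpos
end

section
/- Under Efron's BCD(p), if 0 ≤ m_j < j/2 and m_j ≤ n_1 < j − m_j, then P(N_1(n) = n_1 | N_1(j) = m_j) = C(n−j, n_1−m_j) · p^{n_1−m_j} · q^{n−j−n_1+m_j}, where q = 1−p. -/
/-!
On `N₁(j) = m` with `m ≤ n₁ < j - m`, every path ending at `N₁(n) = n₁` has, at each step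
`i ≥ j`, `N₁(i) ≤ n₁` and `N₁(i) ≤ m + (i - j)`, hence `2 N₁(i) < i`: treatment 1 is behind
throughout, so Efron's design tosses the same `p`-coin at every remaining step. Given the first
`j` steps, `N₁(n) - m` is therefore binomial with parameters `n - j` and `p`; formally this is an
induction on `n` that peels off the last step and closes with Pascal's rule.
-/

open Finset

section Count

variable {n : ℕ} (t : Fin n → Bool)

lemma count1_snoc_of_le (b : Bool) {j : ℕ} (h : j ≤ n) :
    count1 (Fin.snoc t b : Fin (n + 1) → Bool) j = count1 t j := by
  unfold count1
  rw [card_filter, card_filter, Fin.sum_univ_castSucc]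
  simp [Fin.snoc_castSucc, Fin.snoc_last, h.not_gt]

lemma count1_snoc_succ (b : Bool) :
    count1 (Fin.snoc t b : Fin (n + 1) → Bool) (n + 1) = count1 t n + b.toNat := by
  unfold count1
  rw [card_filter, card_filter, Fin.sum_univ_castSucc]
  cases b <;> simp [Fin.snoc_castSucc, Fin.snoc_last]

lemma count1_mono {j j' : ℕ} (h : j ≤ j') : count1 t j ≤ count1 t j' :=
  card_le_card fun i hi => by
    simp only [mem_filter] at *
    exact ⟨hi.1, by omega, hi.2.2⟩

lemma count1_succ_le (j : ℕ) : count1 t (j + 1) ≤ count1 t j + 1 := by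
  unfold count1
  refine (card_le_card_sdiff_add_card (t := {i : Fin n | (i : ℕ) < j ∧ t i = true})).trans ?_
  rw [add_comm]
  gcongr
  refine card_le_one.2 fun a ha b hb => Fin.ext ?_
  simp only [mem_sdiff, mem_filter, mem_univ, true_and] at ha hb
  have ha' : ¬ (a : ℕ) < j := fun h => ha.2 ⟨h, ha.1.2⟩
  have hb' : ¬ (b : ℕ) < j := fun h => hb.2 ⟨h, hb.1.2⟩
  omega

lemma count1_le_add {j j' : ℕ} (h : j ≤ j') : count1 t j' ≤ count1 t j + (j' - j) := by
  induction j', h using Nat.le_induction with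
  | base => simp
  | succ j' _ ih => have := count1_succ_le t j'; omega

end Count

lemma sum_fun_fin_succ {α M : Type*} [Fintype α] [AddCommMonoid M] {n : ℕ}
    (f : (Fin (n + 1) → α) → M) :
    ∑ u, f u = ∑ t : Fin n → α, ∑ b, f (Fin.snoc t b) := by
  rw [← (Fin.snocEquiv fun _ => α).sum_comp f, Fintype.sum_prod_type_right]
  rfl

section Design

variable {n : ℕ} (φ : ℕ → ℕ → ℝ)

lemma pr_empty : pr φ (∅ : Set (Fin n → Bool)) = 0 := by
  simp [pr]

lemma seqProb_snoc (t : Fin n → Bool) (b : Bool) :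
    seqProb φ (Fin.snoc t b : Fin (n + 1) → Bool) =
      seqProb φ t * if b then φ n (count1 t n) else 1 - φ n (count1 t n) := by
  unfold seqProb
  rw [Fin.prod_univ_castSucc]
  congr 1
  · refine prod_congr rfl fun i _ => ?_
    rw [Fin.snoc_castSucc, Fin.val_castSucc, count1_snoc_of_le t b i.is_lt.le]
  · rw [Fin.snoc_last, Fin.val_last, count1_snoc_of_le t b le_rfl]

lemma pr_preimage_init (S : Set (Fin n → Bool)) :
    pr φ {u : Fin (n + 1) → Bool | Fin.init u ∈ S} = pr φ S := by
  unfold pr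
  rw [sum_fun_fin_succ]
  simp only [Fintype.sum_bool]
  refine sum_congr rfl fun t _ => ?_
  by_cases ht : t ∈ S
  · simp only [Set.mem_ofPred_eq, Fin.init_snoc, ht, ↓reduceIte, seqProb_snoc, Bool.false_eq_true]
    ring
  · simp [ht]

end Design

lemma choose_mul_pow_mul_pow_succ {R : Type*} [CommSemiring R] (a b : R) (L r : ℕ) :
    ((L + 1).choose (r + 1) : R) * a ^ (r + 1) * b ^ (L - r) =
      b * ((L.choose (r + 1) : R) * a ^ (r + 1) * b ^ (L - (r + 1))) +
        a * ((L.choose r : R) * a ^ r * b ^ (L - r)) := by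
  rw [Nat.choose_succ_succ', Nat.cast_add]
  rcases lt_or_ge r L with h | h
  · rw [show L - r = L - (r + 1) + 1 by omega]
    ring
  · rw [Nat.choose_eq_zero_of_lt (by omega : L < r + 1)]
    ring

section LowRegime

variable {φ : ℕ → ℕ → ℝ} {p : ℝ} {n j m : ℕ}

lemma pr_count1_succ_inter (hφ : ∀ i k, 2 * k < i → φ i k = p) (hjn : j ≤ n) {k : ℕ}
    (hk : k + m < j) :
    pr φ ({u : Fin (n + 1) → Bool | count1 u (n + 1) = k} ∩ {u | count1 u j = m}) =
      (1 - p) * pr φ ({t : Fin n → Bool | count1 t n = k} ∩ {t | count1 t j = m}) +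
        p * pr φ ({t : Fin n → Bool | count1 t n + 1 = k} ∩ {t | count1 t j = m}) := by
  unfold pr
  simp only [sum_fun_fin_succ, Fintype.sum_bool]
  rw [mul_sum, mul_sum, ← sum_add_distrib]
  refine Finset.sum_congr rfl fun t _ => ?_
  -- `2 N₁(n) ≤ k + m + (n - j) < n`: treatment 1 is behind, so the design tosses the `p`-coin.
  have hcoin (hj : count1 t j = m) (hn : count1 t n ≤ k) : φ n (count1 t n) = p := by
    have := count1_le_add t hjn
    exact hφ _ _ (by omega)
  by_cases hj : count1 t j = m
  · by_cases hn : count1 t n ≤ k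
    · simp only [Set.mem_inter_iff, Set.mem_ofPred_eq, count1_snoc_succ, Bool.toNat_true,
        Bool.toNat_false, add_zero, count1_snoc_of_le _ _ hjn, hj, and_true, seqProb_snoc,
        ↓reduceIte, Bool.false_eq_true, hcoin hj hn]
      split_ifs <;> ring
    · have : count1 t n ≠ k ∧ count1 t n + 1 ≠ k := by omega
      simp [count1_snoc_succ, this]
  · simp [count1_snoc_of_le _ _ hjn, hj]

theorem pr_count1_inter_eq (hφ : ∀ i k, 2 * k < i → φ i k = p) (hjn : j ≤ n) (r : ℕ)
    (hr : 2 * m + r < j) :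
    pr φ ({t : Fin n → Bool | count1 t n = m + r} ∩ {t | count1 t j = m}) =
      ((n - j).choose r : ℝ) * p ^ r * (1 - p) ^ (n - j - r) *
        pr φ {t : Fin n → Bool | count1 t j = m} := by
  induction n, hjn using Nat.le_induction generalizing r with
  | base =>
    rcases r with _ | r
    · simp
    · have hempty : {t : Fin j → Bool | count1 t j = m + (r + 1)} ∩ {t | count1 t j = m} = ∅ := by
        ext t
        simp only [Set.mem_inter_iff, Set.mem_ofPred_eq, Set.mem_empty_iff_false, iff_false]
        omega
      simp [hempty, pr_empty]
  | succ n hjn ih =>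
    have hB : {u : Fin (n + 1) → Bool | count1 u j = m} =
        {u : Fin (n + 1) → Bool | Fin.init u ∈ {t : Fin n → Bool | count1 t j = m}} := by
      ext u
      obtain ⟨t, b, rfl⟩ : ∃ t b, u = Fin.snoc t b :=
        ⟨Fin.init u, u (Fin.last n), (Fin.snoc_init_self u).symm⟩
      simp [count1_snoc_of_le _ _ hjn]
    rw [pr_count1_succ_inter hφ hjn (by omega), hB, pr_preimage_init, Nat.sub_add_comm hjn]
    rcases r with _ | r
    · have hempty : {t : Fin n → Bool | count1 t n + 1 = m + 0} ∩ {t | count1 t j = m} = ∅ := by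
        ext t
        have := count1_mono t hjn
        simp only [Set.mem_inter_iff, Set.mem_ofPred_eq, Set.mem_empty_iff_false, iff_false]
        omega
      rw [hempty, pr_empty, ih 0 hr]
      simp only [Nat.choose_zero_right, Nat.sub_zero]
      ring
    · have hprev : {t : Fin n → Bool | count1 t n + 1 = m + (r + 1)} = {t | count1 t n = m + r} := by
        ext t
        simp only [Set.mem_ofPred_eq]
        omega
      rw [hprev, ih (r + 1) hr, ih r (by omega), Nat.add_sub_add_right,
        choose_mul_pow_mul_pow_succ]
      ring

end LowRegime

lemma efron_of_two_mul_lt (p : ℝ) {i k : ℕ} (h : 2 * k < i) : efron p i k = p := by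
  rw [efron, if_neg h.ne, if_pos h]

theorem bcd_cond_dist_low_general (n j m n1 : ℕ) (p : ℝ) (hjn : j < n)
    (hlo : m ≤ n1) (hhi : n1 < j - m)
    (hpos : 0 < pr (efron p) {t : Fin n → Bool | count1 t j = m}) :
    condPr (efron p) {t : Fin n → Bool | count1 t n = n1}
        {t : Fin n → Bool | count1 t j = m}
      = ((n - j).choose (n1 - m) : ℝ) * p ^ (n1 - m) * (1 - p) ^ (n - j - (n1 - m)) := by
  obtain ⟨r, rfl⟩ := Nat.exists_eq_add_of_le hlo
  rw [condPr, Nat.add_sub_cancel_left,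
    pr_count1_inter_eq (fun _ _ => efron_of_two_mul_lt p) hjn.le r (by omega),
    mul_div_assoc, div_self hpos.ne', mul_one]

/-- Theorem 2.2, part (1), first case: under Efron's BCD(p), if
`0 ≤ m_j < j/2` and `m_j ≤ n_1 < j − m_j`, then
`P(N_1(n)=n_1 | N_1(j)=m_j) = C(n−j, n_1−m_j) p^{n_1−m_j} q^{n−j−n_1+m_j}`. -/
theorem bcd_cond_dist_low (n j m n1 : ℕ) (p : ℝ) (hp : 1 / 2 ≤ p) (hp1 : p ≤ 1)
    (hj1 : 1 ≤ j) (hjn : j < n) (hbal : 2 * m < j)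
    (hlo : m ≤ n1) (hhi : n1 < j - m)
    (hpos : 0 < pr (efron p) {t : Fin n → Bool | count1 t j = m}) :
    condPr (efron p) {t : Fin n → Bool | count1 t n = n1}
        {t : Fin n → Bool | count1 t j = m}
      = ((n - j).choose (n1 - m) : ℝ) * p ^ (n1 - m) * (1 - p) ^ (n - j - (n1 - m)) :=
  bcd_cond_dist_low_general n j m n1 p hjn hlo hhi hpos
end

section
/- Under a restricted randomization procedure, for fixed monitoring times 0 = r_0 < r_1 < ... < r_l and counts n_{10}=0, n_{11}, ..., n_{1l}, and for r_{k−1} ≤ j < r_k, the conditional probability P(T_{j+1}=1 | N_1(j)=m_j, ∩_{i=k}^{l} {N_1(r_i)=n_{1i}}) equals φ_{j+1}(m_j) · P(N_1(r_k)=n_{1k} | N_1(j+1)=m_j+1) / P(N_1(r_k)=n_{1k} | N_1(j)=m_j); in particular it depends only on the next monitoring constraint N_1(r_k)=n_{1k}. -/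
open Finset

/-!
Flipping the assignment of patient `e + 1` changes neither the earlier assignments nor `N_1(e)`,
so it swaps the two step factors `φ_{e+1}(N_1(e))` and `1 - φ_{e+1}(N_1(e))`. Pairing sequences
in this way sums the later factors out: for an event `S` fixed by the first `e` assignments,
`2 ^ (n - e) P(S)` is the sum over `S` of the first `e` factors. Hence, given such an event with
`N_1(a) = c`, the next assignment is `1` with probability `φ_{a+1}(c)`, and `N_1` is a Markov
chain with transition probabilities `transProb`. In the conditional probability of the theorem
the constraints at `r_{k+1}, …, r_l` then contribute the same factor to the numerator and the
denominator, and what remains are the transition probabilities to `N_1(r_k) = n_{1k}` from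
`N_1(j + 1) = m + 1` and from `N_1(j) = m`.
-/

namespace RestrictedRandomization

open Classical

variable {n : ℕ}

def flipAt (b : Fin n) (t : Fin n → Bool) : Fin n → Bool :=
  Function.update t b (!t b)

lemma flipAt_apply_self (b : Fin n) (t : Fin n → Bool) : flipAt b t b = !t b := by
  simp [flipAt]

lemma flipAt_apply_of_lt {b i : Fin n} (t : Fin n → Bool) (hi : (i : ℕ) < b) :
    flipAt b t i = t i :=
  Function.update_of_ne (Fin.ne_of_lt hi) _ _

lemma flipAt_involutive (b : Fin n) : Function.Involutive (flipAt b) := by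
  intro t
  ext i
  rcases eq_or_ne i b with rfl | hi
  · simp [flipAt]
  · simp [flipAt, Function.update_of_ne hi]

lemma sum_mul_eq_sum_mul_flipAt (b : Fin n) {g : (Fin n → Bool) → ℝ}
    (hg : ∀ t, g (flipAt b t) = g t) (h : (Fin n → Bool) → ℝ) :
    ∑ t, g t * h t = ∑ t, g t * h (flipAt b t) := by
  rw [← (flipAt_involutive b).bijective.sum_comp]
  simp only [hg]

lemma two_mul_sum_mul_of_add_flipAt (b : Fin n) {g h : (Fin n → Bool) → ℝ}
    (hg : ∀ t, g (flipAt b t) = g t) (hh : ∀ t, h t + h (flipAt b t) = 1) :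
    2 * ∑ t, g t * h t = ∑ t, g t := by
  rw [two_mul]
  nth_rewrite 2 [sum_mul_eq_sum_mul_flipAt b hg h]
  simp only [← sum_add_distrib, ← mul_add, hh, mul_one]

def IsPrefixEvent (e : ℕ) (S : Set (Fin n → Bool)) : Prop :=
  ∀ ⦃t t'⦄, (∀ i : Fin n, (i : ℕ) < e → t i = t' i) → t ∈ S → t' ∈ S

namespace IsPrefixEvent

variable {e e' : ℕ} {S T : Set (Fin n → Bool)}

lemma mono (hS : IsPrefixEvent e S) (he : e ≤ e') : IsPrefixEvent e' S :=
  fun _ _ h => hS fun i hi => h i (hi.trans_le he)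

lemma inter (hS : IsPrefixEvent e S) (hT : IsPrefixEvent e T) : IsPrefixEvent e (S ∩ T) :=
  fun _ _ h ht => ⟨hS h ht.1, hT h ht.2⟩

lemma compl (hS : IsPrefixEvent e S) : IsPrefixEvent e Sᶜ :=
  fun _ _ h ht ht' => ht (hS (fun i hi => (h i hi).symm) ht')

lemma flipAt_mem_iff (hS : IsPrefixEvent e S) {b : Fin n} (hb : e ≤ b) (t : Fin n → Bool) :
    flipAt b t ∈ S ↔ t ∈ S :=
  ⟨hS fun _ hi => flipAt_apply_of_lt t (hi.trans_le hb),
    hS fun _ hi => (flipAt_apply_of_lt t (hi.trans_le hb)).symm⟩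

end IsPrefixEvent

lemma isPrefixEvent_apply (i : Fin n) (x : Bool) : IsPrefixEvent (i + 1) {t | t i = x} :=
  fun _ _ h ht => (h i (Nat.lt_succ_self _)).symm.trans ht

lemma count1_congr {t t' : Fin n → Bool} {e j : ℕ}
    (h : ∀ i : Fin n, (i : ℕ) < e → t i = t' i) (hj : j ≤ e) :
    count1 t j = count1 t' j := by
  unfold count1
  congr 1
  ext i
  simp only [mem_filter, mem_univ, true_and, and_congr_right_iff]
  intro hi
  rw [h i (hi.trans_le hj)]

lemma isPrefixEvent_count1 (j m : ℕ) : IsPrefixEvent j {t : Fin n → Bool | count1 t j = m} :=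
  fun _ _ h ht => (count1_congr h le_rfl).symm.trans ht

lemma count1_succ (t : Fin n → Bool) {j : ℕ} (hj : j < n) :
    count1 t (j + 1) = count1 t j + if t ⟨j, hj⟩ = true then 1 else 0 := by
  simp only [count1, card_filter]
  rw [← Fintype.sum_ite_eq' (⟨j, hj⟩ : Fin n) (fun i => if t i = true then 1 else 0),
    ← sum_add_distrib]
  refine sum_congr rfl fun i _ => ?_
  rcases lt_trichotomy (i : ℕ) j with hi | hi | hi
  · simp [hi, hi.trans (Nat.lt_succ_self _), (Fin.ne_of_lt hi : i ≠ ⟨j, hj⟩)]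
  · obtain rfl : i = ⟨j, hj⟩ := Fin.ext hi
    simp
  · simp [(Fin.ne_of_gt hi : i ≠ ⟨j, hj⟩), Nat.not_le.mpr hi, hi.le.not_gt]

noncomputable def stepProb (φ : ℕ → ℕ → ℝ) (t : Fin n → Bool) (i : Fin n) : ℝ :=
  if t i = true then φ i (count1 t i) else 1 - φ i (count1 t i)

noncomputable def prefixProb (φ : ℕ → ℕ → ℝ) (t : Fin n → Bool) (e : ℕ) : ℝ :=
  ∏ i ∈ univ.filter (fun i : Fin n => (i : ℕ) < e), stepProb φ t i

lemma seqProb_eq_prefixProb (φ : ℕ → ℕ → ℝ) (t : Fin n → Bool) :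
    seqProb φ t = prefixProb φ t n := by
  rw [prefixProb, filter_true_of_mem fun i _ => i.isLt]
  rfl

lemma prefixProb_succ (φ : ℕ → ℕ → ℝ) (t : Fin n → Bool) {e : ℕ} (he : e < n) :
    prefixProb φ t (e + 1) = prefixProb φ t e * stepProb φ t ⟨e, he⟩ := by
  have hset : univ.filter (fun i : Fin n => (i : ℕ) < e + 1)
      = insert ⟨e, he⟩ (univ.filter fun i : Fin n => (i : ℕ) < e) := by
    ext i
    simp only [mem_filter, mem_univ, true_and, mem_insert, Fin.ext_iff]
    omega
  rw [prefixProb, prefixProb, hset, prod_insert (by simp), mul_comm]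

lemma prefixProb_congr (φ : ℕ → ℕ → ℝ) {t t' : Fin n → Bool} {e : ℕ}
    (h : ∀ i : Fin n, (i : ℕ) < e → t i = t' i) : prefixProb φ t e = prefixProb φ t' e := by
  refine prod_congr rfl fun i hi => ?_
  replace hi : (i : ℕ) < e := (mem_filter.mp hi).2
  rw [stepProb, stepProb, h i hi, count1_congr h hi.le]

lemma stepProb_add_stepProb_flipAt (φ : ℕ → ℕ → ℝ) (t : Fin n → Bool) (b : Fin n) :
    stepProb φ t b + stepProb φ (flipAt b t) b = 1 := by
  have hcount : count1 (flipAt b t) b = count1 t b :=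
    count1_congr (fun _ hi => flipAt_apply_of_lt t hi) le_rfl
  rw [stepProb, stepProb, flipAt_apply_self, hcount]
  cases t b <;> simp

lemma ite_mem_prefixProb_flipAt (φ : ℕ → ℕ → ℝ) {e : ℕ} {S : Set (Fin n → Bool)}
    (hS : IsPrefixEvent e S) (he : e < n) (t : Fin n → Bool) :
    (if flipAt ⟨e, he⟩ t ∈ S then prefixProb φ (flipAt ⟨e, he⟩ t) e else 0)
      = if t ∈ S then prefixProb φ t e else 0 := by
  rw [hS.flipAt_mem_iff le_rfl, prefixProb_congr φ fun _ hi => flipAt_apply_of_lt t hi]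

lemma seqProb_nonneg {φ : ℕ → ℕ → ℝ} (hφ : ∀ j m, 0 ≤ φ j m ∧ φ j m ≤ 1) (t : Fin n → Bool) :
    0 ≤ seqProb φ t :=
  prod_nonneg fun i _ => by
    split_ifs
    · exact (hφ _ _).1
    · exact sub_nonneg.mpr (hφ _ _).2

lemma pr_nonneg {φ : ℕ → ℕ → ℝ} (hφ : ∀ j m, 0 ≤ φ j m ∧ φ j m ≤ 1)
    (S : Set (Fin n → Bool)) : 0 ≤ pr φ S :=
  sum_nonneg fun t _ => ite_nonneg (seqProb_nonneg hφ t) le_rfl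

lemma pr_mono {φ : ℕ → ℕ → ℝ} (hφ : ∀ j m, 0 ≤ φ j m ∧ φ j m ≤ 1)
    {S T : Set (Fin n → Bool)} (hST : S ⊆ T) : pr φ S ≤ pr φ T :=
  sum_le_sum fun t _ => by
    by_cases hS : t ∈ S
    · simp [hS, hST hS]
    · simpa [hS] using ite_nonneg (seqProb_nonneg hφ t) le_rfl

lemma pr_empty (φ : ℕ → ℕ → ℝ) : pr φ (∅ : Set (Fin n → Bool)) = 0 := by
  simp [pr]

lemma pr_inter_add_pr_inter_compl (φ : ℕ → ℕ → ℝ) (S T : Set (Fin n → Bool)) :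
    pr φ (S ∩ T) + pr φ (S ∩ Tᶜ) = pr φ S := by
  simp only [pr, ← sum_add_distrib]
  refine sum_congr rfl fun t _ => ?_
  by_cases hS : t ∈ S <;> by_cases hT : t ∈ T <;> simp [hS, hT]

lemma pr_mul_two_pow {φ : ℕ → ℕ → ℝ} {e : ℕ} {S : Set (Fin n → Bool)}
    (hS : IsPrefixEvent e S) (he : e ≤ n) :
    pr φ S * 2 ^ (n - e) = ∑ t, if t ∈ S then prefixProb φ t e else 0 := by
  induction he using Nat.decreasingInduction with
  | self => simp [pr, seqProb_eq_prefixProb]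
  | of_succ e he ih =>
    rw [← two_mul_sum_mul_of_add_flipAt ⟨e, he⟩ (ite_mem_prefixProb_flipAt φ hS he)
        (stepProb_add_stepProb_flipAt φ · _),
      show n - e = n - (e + 1) + 1 by omega, pow_succ, ← mul_assoc, ih (hS.mono e.le_succ),
      mul_comm]
    simp only [prefixProb_succ φ _ he, ite_mul, zero_mul]

lemma pr_inter_apply_true {φ : ℕ → ℕ → ℝ} {a c : ℕ} {S : Set (Fin n → Bool)}
    (hS : IsPrefixEvent a S) (hc : ∀ t ∈ S, count1 t a = c) (ha : a < n) :
    pr φ (S ∩ {t | t ⟨a, ha⟩ = true}) = pr φ S * φ a c := by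
  have hcoord : ∀ t, (if t ⟨a, ha⟩ = true then (1 : ℝ) else 0)
      + (if flipAt ⟨a, ha⟩ t ⟨a, ha⟩ = true then 1 else 0) = 1 := fun t => by
    rw [flipAt_apply_self]
    cases t ⟨a, ha⟩ <;> simp
  have hpow : n - a = n - (a + 1) + 1 := by omega
  apply mul_right_cancel₀ (pow_ne_zero (n - a) (two_ne_zero : (2 : ℝ) ≠ 0))
  calc pr φ (S ∩ {t | t ⟨a, ha⟩ = true}) * 2 ^ (n - a)
      = 2 * (pr φ (S ∩ {t | t ⟨a, ha⟩ = true}) * 2 ^ (n - (a + 1))) := by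
        rw [hpow, pow_succ]; ring
    _ = 2 * ∑ t, φ a c * ((if t ∈ S then prefixProb φ t a else 0)
          * if t ⟨a, ha⟩ = true then 1 else 0) := by
        rw [pr_mul_two_pow ((hS.mono (Nat.le_add_right a 1)).inter
          (isPrefixEvent_apply ⟨a, ha⟩ true)) ha]
        congr 1
        refine sum_congr rfl fun t _ => ?_
        by_cases hmem : t ∈ S <;> by_cases ht : t ⟨a, ha⟩ = true
        · simp [hmem, ht, prefixProb_succ φ t ha, stepProb, hc t hmem, mul_comm]
        all_goals simp [hmem, ht]
    _ = pr φ S * φ a c * 2 ^ (n - a) := by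
        rw [← mul_sum, mul_left_comm,
          two_mul_sum_mul_of_add_flipAt ⟨a, ha⟩ (ite_mem_prefixProb_flipAt φ hS ha) hcoord,
          ← pr_mul_two_pow hS ha.le]
        ring

/-- `transProb φ a c d m = P(N_1(a + d) = m | N_1(a) = c)`, by conditioning on `T_{a+1}`. -/
noncomputable def transProb (φ : ℕ → ℕ → ℝ) : ℕ → ℕ → ℕ → ℕ → ℝ
  | _, c, 0, m => if m = c then 1 else 0
  | a, c, d + 1, m =>
    φ a c * transProb φ (a + 1) (c + 1) d m + (1 - φ a c) * transProb φ (a + 1) c d m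

lemma pr_inter_count1_eq {φ : ℕ → ℕ → ℝ} {a b c : ℕ} {S : Set (Fin n → Bool)}
    (hS : IsPrefixEvent a S) (hc : ∀ t ∈ S, count1 t a = c) (hab : a ≤ b) (hb : b ≤ n)
    (m : ℕ) : pr φ (S ∩ {t | count1 t b = m}) = pr φ S * transProb φ a c (b - a) m := by
  obtain ⟨d, rfl⟩ := Nat.exists_eq_add_of_le hab
  rw [Nat.add_sub_cancel_left]
  induction d generalizing a c S with
  | zero =>
    rw [Nat.add_zero]
    by_cases hm : m = c
    · have hSm : S ∩ {t | count1 t a = m} = S :=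
        Set.inter_eq_left.mpr fun t ht => (hc t ht).trans hm.symm
      rw [transProb, if_pos hm, mul_one, hSm]
    · have hSm : S ∩ {t | count1 t a = m} = ∅ :=
        Set.eq_empty_of_forall_notMem fun t ht => hm (ht.2.symm.trans (hc t ht.1))
      rw [transProb, if_neg hm, mul_zero, hSm, pr_empty]
  | succ d ih =>
    have ha : a < n := by omega
    set T : Set (Fin n → Bool) := {t | t ⟨a, ha⟩ = true}
    have hT : IsPrefixEvent (a + 1) T := isPrefixEvent_apply ⟨a, ha⟩ true
    have hcT : ∀ t ∈ S ∩ T, count1 t (a + 1) = c + 1 := fun t ht => by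
      rw [count1_succ t ha, if_pos (show t ⟨a, ha⟩ = true from ht.2), hc t ht.1]
    have hcTc : ∀ t ∈ S ∩ Tᶜ, count1 t (a + 1) = c := fun t ht => by
      rw [count1_succ t ha, if_neg (show ¬t ⟨a, ha⟩ = true from ht.2), hc t ht.1, add_zero]
    have hST : pr φ (S ∩ T) = pr φ S * φ a c := pr_inter_apply_true hS hc ha
    have hSTc : pr φ (S ∩ Tᶜ) = pr φ S * (1 - φ a c) := by
      rw [mul_one_sub, ← hST, ← pr_inter_add_pr_inter_compl φ S T, add_sub_cancel_left]
    have hS' := hS.mono (Nat.le_add_right a 1)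
    rw [← pr_inter_add_pr_inter_compl φ _ T, Set.inter_right_comm, Set.inter_right_comm _ _ Tᶜ,
      show a + (d + 1) = a + 1 + d by omega, ih (hS'.inter hT) hcT (by omega) (by omega),
      ih (hS'.inter hT.compl) hcTc (by omega) (by omega), hST, hSTc, transProb]
    ring

lemma condPr_count1_eq_transProb {φ : ℕ → ℕ → ℝ} {a b c : ℕ} (hab : a ≤ b) (hb : b ≤ n) (m : ℕ)
    (h : pr φ {t : Fin n → Bool | count1 t a = c} ≠ 0) :
    condPr φ {t : Fin n → Bool | count1 t b = m} {t | count1 t a = c}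
      = transProb φ a c (b - a) m := by
  rw [condPr, Set.inter_comm,
    pr_inter_count1_eq (isPrefixEvent_count1 a c) (fun _ ht => ht) hab hb m,
    mul_div_cancel_left₀ _ h]

lemma exists_pr_inter_counts_eq_mul (φ : ℕ → ℕ → ℝ) {l : ℕ} {r : ℕ → ℕ} (n1 : ℕ → ℕ)
    (hr : ∀ i < l, r i ≤ r (i + 1)) (hrn : ∀ i ≤ l, r i ≤ n) {s : ℕ} (hs : s ≤ l) :
    ∃ R : ℝ, ∀ {a c : ℕ} {S : Set (Fin n → Bool)}, IsPrefixEvent a S →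
      (∀ t ∈ S, count1 t a = c) → a ≤ r s →
      pr φ (S ∩ {t | ∀ i ∈ Icc s l, count1 t (r i) = n1 i})
        = pr φ S * transProb φ a c (r s - a) (n1 s) * R := by
  induction hs using Nat.decreasingInduction with
  | self =>
    refine ⟨1, fun {a c S} hS hc ha => ?_⟩
    simpa using pr_inter_count1_eq hS hc ha (hrn l le_rfl) (n1 l) (φ := φ)
  | of_succ s hs ih =>
    obtain ⟨R, hR⟩ := ih
    refine ⟨transProb φ (r s) (n1 s) (r (s + 1) - r s) (n1 (s + 1)) * R,
      fun {a c S} hS hc ha => ?_⟩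
    have hset : S ∩ {t | ∀ i ∈ Icc s l, count1 t (r i) = n1 i}
        = S ∩ {t | count1 t (r s) = n1 s} ∩ {t | ∀ i ∈ Icc (s + 1) l, count1 t (r i) = n1 i} := by
      rw [Set.inter_assoc, ← Set.ofPred_and, ← insert_Icc_add_one_left_eq_Icc hs.le]
      simp only [forall_mem_insert]
    rw [hset, hR ((hS.mono ha).inter (isPrefixEvent_count1 _ _)) (fun t ht => ht.2) (hr s hs),
      pr_inter_count1_eq hS hc ha (hrn s hs.le)]
    ring

end RestrictedRandomization

open RestrictedRandomization

/-- Theorem 3.1: for monitoring times `0 = r_0 < r_1 < … < r_l`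
and counts `n_{1i}`, and `r_{k−1} ≤ j < r_k`,
`P(T_{j+1}=1 | N_1(j)=m_j, ∩_{i=k}^{l} {N_1(r_i)=n_{1i}})
  = φ_{j+1}(m_j) · P(N_1(r_k)=n_{1k} | N_1(j+1)=m_j+1)
      / P(N_1(r_k)=n_{1k} | N_1(j)=m_j)`;
in particular it depends only on the next monitoring constraint. -/
theorem thm3_1 (n : ℕ) (φ : ℕ → ℕ → ℝ) (hφ : ∀ j m, 0 ≤ φ j m ∧ φ j m ≤ 1)
    (l : ℕ) (r : ℕ → ℕ)
    (hrmono : ∀ i < l, r i < r (i + 1)) (hrn : ∀ i ≤ l, r i ≤ n)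
    (n1 : ℕ → ℕ) (k : ℕ) (hkl : k ≤ l)
    (j m : ℕ) (hjhi : j < r k)
    (hpos : 0 < pr φ {t : Fin n → Bool |
        count1 t j = m ∧ ∀ i ∈ Finset.Icc k l, count1 t (r i) = n1 i}) :
    condPr φ {t : Fin n → Bool | t ⟨j, by exact lt_of_lt_of_le hjhi (hrn k hkl)⟩ = true}
        {t : Fin n → Bool |
          count1 t j = m ∧ ∀ i ∈ Finset.Icc k l, count1 t (r i) = n1 i}
      = φ j m
          * condPr φ {t : Fin n → Bool | count1 t (r k) = n1 k}
              {t : Fin n → Bool | count1 t (j + 1) = m + 1}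
          / condPr φ {t : Fin n → Bool | count1 t (r k) = n1 k}
              {t : Fin n → Bool | count1 t j = m} := by
  have hj : j < n := hjhi.trans_le (hrn k hkl)
  set S := {t : Fin n → Bool | count1 t j = m}
  set S' := S ∩ {t | t ⟨j, hj⟩ = true}
  have hS : IsPrefixEvent j S := isPrefixEvent_count1 j m
  have hS' : IsPrefixEvent (j + 1) S' :=
    (hS.mono (Nat.le_add_right j 1)).inter (isPrefixEvent_apply ⟨j, hj⟩ true)
  have hcS' : ∀ t ∈ S', count1 t (j + 1) = m + 1 := fun t ht => by
    rw [count1_succ t hj, if_pos (show t ⟨j, hj⟩ = true from ht.2), ht.1]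
  have hpS' : pr φ S' = pr φ S * φ j m := pr_inter_apply_true hS (fun _ ht => ht) hj
  obtain ⟨R, hR⟩ := exists_pr_inter_counts_eq_mul φ n1 (fun i hi => (hrmono i hi).le) hrn hkl
  have hden : pr φ {t : Fin n → Bool | count1 t j = m ∧ ∀ i ∈ Icc k l, count1 t (r i) = n1 i}
      = pr φ S * transProb φ j m (r k - j) (n1 k) * R := by
    rw [Set.ofPred_and]
    exact hR hS (fun _ ht => ht) hjhi.le
  have hnum : pr φ ({t | t ⟨j, hj⟩ = true}
        ∩ {t : Fin n → Bool | count1 t j = m ∧ ∀ i ∈ Icc k l, count1 t (r i) = n1 i})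
      = pr φ S * φ j m * transProb φ (j + 1) (m + 1) (r k - (j + 1)) (n1 k) * R := by
    rw [Set.ofPred_and, ← Set.inter_assoc, Set.inter_comm _ S, hR hS' hcS' hjhi, hpS']
  obtain ⟨hSQ, hR0⟩ := mul_ne_zero_iff.mp (hden ▸ hpos.ne')
  obtain ⟨hS0, hQ0⟩ := mul_ne_zero_iff.mp hSQ
  rw [condPr, hnum, hden, condPr_count1_eq_transProb hjhi.le (hrn k hkl) _ hS0]
  rcases eq_or_ne (φ j m) 0 with hφ0 | hφ0
  · simp [hφ0]
  have hpS'_pos : 0 < pr φ S' := (pr_nonneg hφ S').lt_of_ne' (hpS' ▸ mul_ne_zero hS0 hφ0)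
  rw [condPr_count1_eq_transProb hjhi (hrn k hkl) _ (hpS'_pos.trans_le (pr_mono hφ hcS')).ne']
  field_simp
end

section
/- Under sequential conditioning on monitoring constraints ∩_{q=1}^{l} {N_1(r_q)=n_{1q}} for a restricted randomization procedure φ, if i and j lie in different inter-monitoring blocks (i.e., there is no k with r_{k−1} < i < j ≤ r_k), then T_i and T_j are conditionally uncorrelated: E(T_i T_j | ∩_q {N_1(r_q)=n_{1q}}) = E(T_i | ∩_q {N_1(r_q)=n_{1q}}) · E(T_j | ∩_q {N_1(r_q)=n_{1q}}); consequently the conditional covariance matrix Σ_{|r_l} is block diagonal with blocks corresponding to the intervals (r_{k−1}, r_k]. -/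
/-!
Let `m = r k` be a monitoring time with `i ≤ m < j`; it exists because `i` and `j` lie in
different blocks. Splicing the first `m` assignments of one sequence onto the remaining ones of
another sequence with the same `N₁(m)` keeps the product of the two sequence probabilities, since
every factor `φ` only sees the running count. The swap `(t, s) ↦ (t|s, s|t)` is therefore a
probability-preserving involution on pairs, matching `{T_i = T_j = 1} ∩ B` × `B` with
`({T_i = 1} ∩ B)` × `({T_j = 1} ∩ B)` for the monitoring event `B`, which fixes `N₁(m)`.
-/

open Finset

/-!
Let `m = r k` be a monitoring time with `i ≤ m < j`; it exists because `i` and `j` lie in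
different blocks. Splicing the first `m` assignments of one sequence onto the remaining ones of
another sequence with the same `N₁(m)` keeps the product of the two sequence probabilities, since
every factor `φ` only sees the running count. The swap `(t, s) ↦ (t|s, s|t)` is therefore a
probability-preserving involution on pairs, matching `{T_i = T_j = 1} ∩ B` × `B` with
`({T_i = 1} ∩ B)` × `({T_j = 1} ∩ B)` for the monitoring event `B`, which fixes `N₁(m)`.
-/

def spliceAt {n : ℕ} (m : ℕ) (t s : Fin n → Bool) : Fin n → Bool :=
  fun i => if (i : ℕ) < m then t i else s i

section Splice

variable {n m : ℕ}

lemma spliceAt_of_lt (t s : Fin n → Bool) {i : Fin n} (h : (i : ℕ) < m) :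
    spliceAt m t s i = t i :=
  if_pos h

lemma spliceAt_of_ge (t s : Fin n → Bool) {i : Fin n} (h : m ≤ (i : ℕ)) :
    spliceAt m t s i = s i :=
  if_neg h.not_gt

lemma spliceAt_spliceAt (t s : Fin n → Bool) :
    spliceAt m (spliceAt m t s) (spliceAt m s t) = t := by
  funext i
  by_cases h : (i : ℕ) < m <;> simp [spliceAt, h]

lemma count1_spliceAt_of_le (t s : Fin n → Bool) {j : ℕ} (hj : j ≤ m) :
    count1 (spliceAt m t s) j = count1 t j := by
  unfold count1
  congr 1
  refine filter_congr fun x _ => and_congr_right fun hx => ?_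
  rw [spliceAt_of_lt t s (hx.trans_le hj)]

lemma count1_add_card_filter (u : Fin n → Bool) {j : ℕ} (h : m ≤ j) :
    count1 u m + #{x : Fin n | m ≤ (x : ℕ) ∧ (x : ℕ) < j ∧ u x = true} = count1 u j := by
  unfold count1
  rw [← card_union_of_disjoint (disjoint_filter.2 fun x _ h₁ h₂ => by omega)]
  congr 1
  ext x
  simp only [mem_union, mem_filter, mem_univ, true_and]
  constructor
  · rintro (⟨hx, hu⟩ | ⟨-, hx, hu⟩) <;> exact ⟨by omega, hu⟩
  · rintro ⟨hx, hu⟩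
    by_cases hxm : (x : ℕ) < m
    exacts [Or.inl ⟨hxm, hu⟩, Or.inr ⟨by omega, hx, hu⟩]

lemma count1_spliceAt_of_ge {t s : Fin n → Bool} (hc : count1 t m = count1 s m) {j : ℕ}
    (hj : m ≤ j) : count1 (spliceAt m t s) j = count1 s j := by
  rw [← count1_add_card_filter _ hj, ← count1_add_card_filter _ hj,
    count1_spliceAt_of_le t s le_rfl, hc]
  congr 2
  refine filter_congr fun x _ => and_congr_right fun hx => ?_
  rw [spliceAt_of_ge t s hx]

lemma seqProb_spliceAt_mul (φ : ℕ → ℕ → ℝ) {t s : Fin n → Bool}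
    (hc : count1 t m = count1 s m) :
    seqProb φ (spliceAt m t s) * seqProb φ (spliceAt m s t) = seqProb φ t * seqProb φ s := by
  unfold seqProb
  rw [← prod_mul_distrib, ← prod_mul_distrib]
  refine prod_congr rfl fun x _ => ?_
  rcases lt_or_ge (x : ℕ) m with hx | hx
  · rw [spliceAt_of_lt t s hx, spliceAt_of_lt s t hx,
      count1_spliceAt_of_le t s hx.le, count1_spliceAt_of_le s t hx.le]
  · rw [spliceAt_of_ge t s hx, spliceAt_of_ge s t hx,
      count1_spliceAt_of_ge hc hx, count1_spliceAt_of_ge hc.symm hx, mul_comm]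

end Splice

section Probability

variable {n : ℕ} (φ : ℕ → ℕ → ℝ)

open Classical in
lemma pr_mul_pr (S T : Set (Fin n → Bool)) :
    pr φ S * pr φ T =
      ∑ p ∈ univ.filter (· ∈ S) ×ˢ univ.filter (· ∈ T),
        seqProb φ p.1 * seqProb φ p.2 := by
  rw [sum_product, pr, pr, ← sum_filter, ← sum_filter, sum_mul_sum]

/-- Markov property of `N₁` at time `m`: given `B`, which fixes `N₁(m)`, an event `P` of the
assignments before `m` and an event `F` of those from `m` on are independent. -/
theorem pr_inter_mul_pr_eq_of_spliceAt (m : ℕ) {B P F : Set (Fin n → Bool)}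
    (hB_count : ∀ t ∈ B, ∀ s ∈ B, count1 t m = count1 s m)
    (hB_splice : ∀ t ∈ B, ∀ s ∈ B, spliceAt m t s ∈ B)
    (hP : ∀ t s, spliceAt m t s ∈ P ↔ t ∈ P) (hF : ∀ t s, spliceAt m t s ∈ F ↔ s ∈ F) :
    pr φ (P ∩ F ∩ B) * pr φ B = pr φ (P ∩ B) * pr φ (F ∩ B) := by
  classical
  rw [pr_mul_pr, pr_mul_pr]
  have swap_swap (p : (Fin n → Bool) × (Fin n → Bool)) :
      (spliceAt m (spliceAt m p.1 p.2) (spliceAt m p.2 p.1),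
        spliceAt m (spliceAt m p.2 p.1) (spliceAt m p.1 p.2)) = p := by
    simp only [spliceAt_spliceAt]
  refine sum_nbij' (fun p => (spliceAt m p.1 p.2, spliceAt m p.2 p.1))
    (fun p => (spliceAt m p.1 p.2, spliceAt m p.2 p.1)) ?_ ?_ (fun p _ => swap_swap p)
    (fun p _ => swap_swap p) ?_
  · rintro ⟨u, v⟩ huv
    simp only [mem_product, mem_filter, mem_univ, true_and] at huv ⊢
    obtain ⟨⟨⟨huP, huF⟩, huB⟩, hvB⟩ := huv
    exact ⟨⟨(hP u v).2 huP, hB_splice u huB v hvB⟩, (hF v u).2 huF, hB_splice v hvB u huB⟩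
  · rintro ⟨t, s⟩ hts
    simp only [mem_product, mem_filter, mem_univ, true_and] at hts ⊢
    obtain ⟨⟨htP, htB⟩, hsF, hsB⟩ := hts
    exact ⟨⟨⟨(hP t s).2 htP, (hF t s).2 hsF⟩, hB_splice t htB s hsB⟩, hB_splice s hsB t htB⟩
  · rintro ⟨u, v⟩ huv
    simp only [mem_product, mem_filter, mem_univ, true_and] at huv
    exact (seqProb_spliceAt_mul φ (hB_count u huv.1.2 v huv.2)).symm

lemma condPr_inter_eq_mul {A C B : Set (Fin n → Bool)}
    (h : pr φ (A ∩ C ∩ B) * pr φ B = pr φ (A ∩ B) * pr φ (C ∩ B)) :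
    condPr φ (A ∩ C) B = condPr φ A B * condPr φ C B := by
  unfold condPr
  rcases eq_or_ne (pr φ B) 0 with hB | hB
  · simp [hB]
  · field_simp
    linear_combination h

theorem condPr_and_eq_mul_of_lt_of_le (m : ℕ) {B : Set (Fin n → Bool)}
    (hB_count : ∀ t ∈ B, ∀ s ∈ B, count1 t m = count1 s m)
    (hB_splice : ∀ t ∈ B, ∀ s ∈ B, spliceAt m t s ∈ B) {a b : Fin n} (ha : (a : ℕ) < m)
    (hb : m ≤ (b : ℕ)) :
    condPr φ {t | t a = true ∧ t b = true} B =
      condPr φ {t | t a = true} B * condPr φ {t | t b = true} B :=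
  condPr_inter_eq_mul φ <| pr_inter_mul_pr_eq_of_spliceAt φ m hB_count hB_splice
    (P := {t | t a = true}) (F := {t | t b = true})
    (fun t s => by rw [Set.mem_ofPred_eq, spliceAt_of_lt t s ha]; rfl)
    (fun t s => by rw [Set.mem_ofPred_eq, spliceAt_of_ge t s hb]; rfl)

end Probability

lemma spliceAt_mem_monitoring {n : ℕ} {Q : Finset ℕ} {r n1 : ℕ → ℕ} {k : ℕ} (hk : k ∈ Q)
    {t s : Fin n → Bool} (ht : ∀ q ∈ Q, count1 t (r q) = n1 q)
    (hs : ∀ q ∈ Q, count1 s (r q) = n1 q) :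
    ∀ q ∈ Q, count1 (spliceAt (r k) t s) (r q) = n1 q := by
  have hc : count1 t (r k) = count1 s (r k) := by rw [ht k hk, hs k hk]
  intro q hq
  rcases le_total (r q) (r k) with h | h
  · rw [count1_spliceAt_of_le t s h, ht q hq]
  · rw [count1_spliceAt_of_ge hc h, hs q hq]

lemma exists_monitoring_time_between {l : ℕ} {r : ℕ → ℕ} (hr0 : r 0 = 0) {i j : ℕ}
    (hi : 1 ≤ i) (hil : i ≤ r l) (hblocks : ¬ ∃ k, 1 ≤ k ∧ k ≤ l ∧ r (k - 1) < i ∧ j ≤ r k) :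
    ∃ k ∈ Icc 1 l, i ≤ r k ∧ r k < j := by
  have hex : ∃ k, k ≤ l ∧ i ≤ r k := ⟨l, le_rfl, hil⟩
  obtain ⟨hkl, hik⟩ := Nat.find_spec hex
  have hk1 : 1 ≤ Nat.find hex := by
    by_contra h
    rw [show Nat.find hex = 0 by omega, hr0] at hik
    omega
  have hprev : r (Nat.find hex - 1) < i := by
    by_contra h
    exact Nat.find_min hex (show Nat.find hex - 1 < Nat.find hex by omega) ⟨by omega, by omega⟩
  exact ⟨Nat.find hex, mem_Icc.2 ⟨hk1, hkl⟩, hik,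
    Nat.lt_of_not_le fun h => hblocks ⟨_, hk1, hkl, hprev, h⟩⟩

/-- under sequential conditioning on the monitoring constraints
`∩_{q=1}^{l} {N_1(r_q)=n_{1q}}`, if `i < j ≤ r_l` lie in different
inter-monitoring blocks (no `k` with `r_{k−1} < i < j ≤ r_k`), then `T_i` and
`T_j` are conditionally uncorrelated:
`E(T_i T_j | ·) = E(T_i | ·)·E(T_j | ·)`; hence the conditional covariance
matrix is block diagonal with blocks the intervals `(r_{k−1}, r_k]`. -/
theorem block_diagonal_cov (n : ℕ) (φ : ℕ → ℕ → ℝ)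
    (l : ℕ) (r : ℕ → ℕ) (hr0 : r 0 = 0)
    (n1 : ℕ → ℕ)
    (i j : ℕ) (hi : 1 ≤ i) (hij : i < j) (hjrl : j ≤ r l) (hjn : j ≤ n)
    (hblocks : ¬ ∃ k, 1 ≤ k ∧ k ≤ l ∧ r (k - 1) < i ∧ j ≤ r k) :
    condPr φ
        {t : Fin n → Bool | t ⟨i - 1, by omega⟩ = true ∧ t ⟨j - 1, by omega⟩ = true}
        {t : Fin n → Bool | ∀ q ∈ Finset.Icc 1 l, count1 t (r q) = n1 q}
      = condPr φ {t : Fin n → Bool | t ⟨i - 1, by omega⟩ = true}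
            {t : Fin n → Bool | ∀ q ∈ Finset.Icc 1 l, count1 t (r q) = n1 q}
          * condPr φ {t : Fin n → Bool | t ⟨j - 1, by omega⟩ = true}
              {t : Fin n → Bool | ∀ q ∈ Finset.Icc 1 l, count1 t (r q) = n1 q} := by
  obtain ⟨k, hk, hik, hkj⟩ := exists_monitoring_time_between hr0 hi (hij.le.trans hjrl) hblocks
  refine condPr_and_eq_mul_of_lt_of_le φ (r k) ?_ ?_ (show i - 1 < r k by omega)
    (show r k ≤ j - 1 by omega)
  · intro t ht s hs
    rw [ht k hk, hs k hk]
  · intro t ht s hs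
    exact spliceAt_mem_monitoring hk ht hs
end
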